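/- arXiv:1411.3926 — 3 statements merged into one kernel-verified Lean document; each statement's English description precedes it below -/
import Mathlib

section
/- For 0 ≤ k ≤ ⌊m/2⌋ and any harmonic homogeneous polynomial h of degree m - 2k on ℝ^n, the polynomial p = r^{2k} h satisfies A_α p = (α + 2k)(2m - 2k + α + n - 2) p, where A_α = r^2Δ + 2α r∂_r + α(α+n-2). -/
open MvPolynomial

noncomputable section

/-- The polynomial Laplacian `Δp = ∑ ∂²p/∂xᵢ²` on `ℝ^n`. -/
def pLap (n : ℕ) (p : MvPolynomial (Fin n) ℝ) : MvPolynomial (Fin n) ℝ :=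
  ∑ i : Fin n, pderiv i (pderiv i p)

/-- The polynomial `r² = |x|² = ∑ xᵢ²`. -/
def r2 (n : ℕ) : MvPolynomial (Fin n) ℝ := ∑ i : Fin n, X i ^ 2

/-- The radial derivative `r∂_r p = ∑ xᵢ ∂p/∂xᵢ`. -/
def prdr (n : ℕ) (p : MvPolynomial (Fin n) ℝ) : MvPolynomial (Fin n) ℝ :=
  ∑ i : Fin n, X i * pderiv i p

/-- The operator `A_α = r²Δ + 2α r∂_r + α(α+n-2)`. -/
def Apol (n : ℕ) (α : ℝ) (p : MvPolynomial (Fin n) ℝ) : MvPolynomial (Fin n) ℝ :=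
  r2 n * pLap n p + C (2 * α) * prdr n p + C (α * (α + (n : ℝ) - 2)) * p

/-- The operator `B_α = 2 r∂_r + (2α+n-2)`. -/
def Bpol (n : ℕ) (α : ℝ) (p : MvPolynomial (Fin n) ℝ) : MvPolynomial (Fin n) ℝ :=
  C 2 * prdr n p + C (2 * α + (n : ℝ) - 2) * p

/-!
By Euler's identity `r∂_r` is multiplication by `d` on homogeneous polynomials of degree `d`, and
the product rule gives `Δ(r² q) = 2n q + 4 r∂_r q + r² Δq`. Iterating, a harmonic `h` of degree `d`
satisfies `r² Δ(r^{2k} h) = 2k(2k + 2d + n - 2) r^{2k} h`, so each of the three terms of `A_α`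
acts on `r^{2k} h` as a scalar; for `d = m - 2k` these scalars add up to
`(α + 2k)(2m - 2k + α + n - 2)`.
-/

lemma prdr_eq_of_isHomogeneous {n d : ℕ} {p : MvPolynomial (Fin n) ℝ} (hp : p.IsHomogeneous d) :
    prdr n p = C (d : ℝ) * p := by
  rw [prdr, hp.sum_X_mul_pderiv, nsmul_eq_mul, ← map_natCast C]

lemma isHomogeneous_r2 (n : ℕ) : (r2 n).IsHomogeneous 2 :=
  IsHomogeneous.sum _ _ _ fun _ _ => (isHomogeneous_X _ _).pow 2

lemma pderiv_r2 (n : ℕ) (i : Fin n) : pderiv i (r2 n) = C 2 * X i := by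
  rw [r2, map_sum, Finset.sum_eq_single i (fun j _ hj => by simp [pderiv_X_of_ne hj]) (by simp)]
  simp [map_ofNat]

lemma pLap_r2_mul (n : ℕ) (q : MvPolynomial (Fin n) ℝ) :
    pLap n (r2 n * q) = C (2 * (n : ℝ)) * q + C 4 * prdr n q + r2 n * pLap n q := by
  have hi (i : Fin n) : pderiv i (pderiv i (r2 n * q)) =
      C 2 * q + C 4 * (X i * pderiv i q) + r2 n * pderiv i (pderiv i q) := by
    simp only [pderiv_mul, pderiv_r2, map_add, pderiv_C, pderiv_X_self]
    simp only [map_ofNat]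
    ring
  simp only [pLap, prdr, hi, Finset.sum_add_distrib, ← Finset.mul_sum, Finset.sum_const,
    Finset.card_univ, Fintype.card_fin, nsmul_eq_mul, map_mul, map_natCast, map_ofNat]
  ring

-- Multiplied by `r²`, so that no `r^{2k-2}` appears for `k = 0`.
lemma r2_mul_pLap_r2_pow_mul {n d : ℕ} {q : MvPolynomial (Fin n) ℝ} (hq : q.IsHomogeneous d)
    (k : ℕ) : r2 n * pLap n (r2 n ^ k * q) =
      C (2 * (k : ℝ) * (2 * k + 2 * d + n - 2)) * (r2 n ^ k * q) + r2 n ^ (k + 1) * pLap n q := by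
  induction k with
  | zero => simp
  | succ k ih =>
    have hdeg : (r2 n ^ k * q).IsHomogeneous (2 * k + d) := ((isHomogeneous_r2 n).pow k).mul hq
    rw [pow_succ', mul_assoc, pLap_r2_mul, prdr_eq_of_isHomogeneous hdeg, mul_add, ih]
    simp only [map_add, map_sub, map_mul, map_natCast, map_ofNat, map_one, Nat.cast_add,
      Nat.cast_mul, Nat.cast_ofNat, Nat.cast_one]
    ring

/-- For `0 ≤ k ≤ ⌊m/2⌋` and any harmonic homogeneous polynomial `h` of degree
`m - 2k` on `ℝ^n`, the polynomial `p = r^{2k} h` satisfies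
`A_α p = (α + 2k)(2m - 2k + α + n - 2) p`, where `A_α = r²Δ + 2α r∂_r + α(α+n-2)`. -/
theorem stmt6 (n m k : ℕ) (α : ℝ) (hk : 2 * k ≤ m) (h : MvPolynomial (Fin n) ℝ)
    (hhom : h.IsHomogeneous (m - 2 * k)) (hharm : pLap n h = 0) :
    Apol n α (r2 n ^ k * h) =
      C ((α + 2 * (k : ℝ)) * (2 * (m : ℝ) - 2 * (k : ℝ) + α + (n : ℝ) - 2)) * (r2 n ^ k * h) := by
  have hdeg : (r2 n ^ k * h).IsHomogeneous m := by
    simpa [Nat.add_sub_cancel' hk] using ((isHomogeneous_r2 n).pow k).mul hhom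
  rw [Apol, r2_mul_pLap_r2_pow_mul hhom, hharm, mul_zero, add_zero, prdr_eq_of_isHomogeneous hdeg,
    Nat.cast_sub hk]
  simp only [map_add, map_sub, map_mul, map_natCast, map_ofNat, Nat.cast_mul, Nat.cast_ofNat]
  ring
end
end

section
/- With W as an algebraic Weyl tensor on ℝ^n, the function F(x) = Σ_{k,l} (Σ_{i,j} W_{ikjl} x_i x_j)^2 satisfies Δ F(x) = 2 Σ_{j,k,l} (Σ_i W_{ijkl} x_i + Σ_i W_{ilkj} x_i)^2, where Δ is the Euclidean Laplacian. -/
/-!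
Each `q_{kl}(x) = ∑ W_{ikjl} x_i x_j` is a quadratic form, so `Δ(q²) = 2 q Δq + 2 |∇q|²`.
Here `Δq_{kl} = 2 ∑_i W_{ikil}` vanishes because `W` is trace-free, and by the pair symmetry
`W_{akjl} = W_{jlak}` the partial derivative `∂_a q_{kl}` equals `∑_i W_{ilak} x_i + ∑_i W_{ikal} x_i`;
summing the squares over `a, k, l` and renaming the indices gives the formula.
-/

open Finset

noncomputable section

/-- The Euclidean Laplacian `Δf = ∑ ∂²f/∂xᵢ²` on `ℝ^n`. -/
def lap (n : ℕ) (f : EuclideanSpace ℝ (Fin n) → ℝ) (x : EuclideanSpace ℝ (Fin n)) : ℝ :=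
  ∑ i : Fin n, iteratedFDeriv ℝ 2 f x ![EuclideanSpace.single i 1, EuclideanSpace.single i 1]

section SecondDerivative

variable {𝕜 E : Type*} [NontriviallyNormedField 𝕜] [NormedAddCommGroup E] [NormedSpace 𝕜 E]

theorem fderiv_fderiv_mul_apply {f g : E → 𝕜} (hf : ContDiff 𝕜 2 f) (hg : ContDiff 𝕜 2 g)
    (x u v : E) :
    fderiv 𝕜 (fderiv 𝕜 fun y => f y * g y) x u v =
      f x * fderiv 𝕜 (fderiv 𝕜 g) x u v + fderiv 𝕜 f x u * fderiv 𝕜 g x v +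
        fderiv 𝕜 f x v * fderiv 𝕜 g x u + g x * fderiv 𝕜 (fderiv 𝕜 f) x u v := by
  have hf1 := hf.differentiable two_ne_zero
  have hg1 := hg.differentiable two_ne_zero
  have hf2 := (hf.fderiv_right (m := 1) le_rfl).differentiable one_ne_zero
  have hg2 := (hg.fderiv_right (m := 1) le_rfl).differentiable one_ne_zero
  have hderiv : fderiv 𝕜 (fun y => f y * g y) = fun y => f y • fderiv 𝕜 g y + g y • fderiv 𝕜 f y :=
    funext fun y => fderiv_fun_mul (hf1 y) (hg1 y)
  rw [hderiv, (((hf1 x).hasFDerivAt.fun_smul (hg2 x).hasFDerivAt).fun_add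
    ((hg1 x).hasFDerivAt.fun_smul (hf2 x).hasFDerivAt)).fderiv]
  simp only [add_apply, smul_apply, ContinuousLinearMap.smulRight_apply, smul_eq_mul]
  ring

end SecondDerivative

section Laplacian

variable {n : ℕ}

theorem lap_eq_sum_fderiv_fderiv (f : EuclideanSpace ℝ (Fin n) → ℝ)
    (x : EuclideanSpace ℝ (Fin n)) :
    lap n f x = ∑ i, fderiv ℝ (fderiv ℝ f) x (EuclideanSpace.single i 1)
      (EuclideanSpace.single i 1) := by
  simp [lap, iteratedFDeriv_two_apply]

theorem lap_fun_sum {ι : Type*} {s : Finset ι} {f : ι → EuclideanSpace ℝ (Fin n) → ℝ}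
    (hf : ∀ j ∈ s, ContDiff ℝ 2 (f j)) (x : EuclideanSpace ℝ (Fin n)) :
    lap n (fun y => ∑ j ∈ s, f j y) x = ∑ j ∈ s, lap n (f j) x := by
  simp only [lap, iteratedFDeriv_fun_sum_apply fun j hj => (hf j hj).contDiffAt, _root_.sum_apply]
  exact sum_comm

theorem lap_mul {f g : EuclideanSpace ℝ (Fin n) → ℝ} (hf : ContDiff ℝ 2 f) (hg : ContDiff ℝ 2 g)
    (x : EuclideanSpace ℝ (Fin n)) :
    lap n (fun y => f y * g y) x = f x * lap n g x +
      2 * ∑ i, fderiv ℝ f x (EuclideanSpace.single i 1) * fderiv ℝ g x (EuclideanSpace.single i 1) +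
        g x * lap n f x := by
  simp only [lap_eq_sum_fderiv_fderiv, fderiv_fderiv_mul_apply hf hg, mul_sum, ← sum_add_distrib]
  exact sum_congr rfl fun i _ => by ring

theorem lap_sq {f : EuclideanSpace ℝ (Fin n) → ℝ} (hf : ContDiff ℝ 2 f)
    (x : EuclideanSpace ℝ (Fin n)) :
    lap n (fun y => f y ^ 2) x =
      2 * f x * lap n f x + 2 * ∑ i, fderiv ℝ f x (EuclideanSpace.single i 1) ^ 2 := by
  simp only [sq, lap_mul hf hf]
  ring

theorem lap_clm (L : EuclideanSpace ℝ (Fin n) →L[ℝ] ℝ) (x : EuclideanSpace ℝ (Fin n)) :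
    lap n L x = 0 := by
  have hL : fderiv ℝ L = fun _ => L := funext fun _ => L.fderiv
  simp [lap_eq_sum_fderiv_fderiv, hL]

theorem lap_clm_mul_clm (L M : EuclideanSpace ℝ (Fin n) →L[ℝ] ℝ) (x : EuclideanSpace ℝ (Fin n)) :
    lap n (fun y => L y * M y) x =
      2 * ∑ i, L (EuclideanSpace.single i 1) * M (EuclideanSpace.single i 1) := by
  rw [lap_mul L.contDiff M.contDiff, lap_clm, lap_clm, L.fderiv, M.fderiv]
  ring

theorem fderiv_quadratic_apply_single (A : Fin n → Fin n → ℝ) (x : EuclideanSpace ℝ (Fin n)) (a : Fin n) :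
    fderiv ℝ (fun y : EuclideanSpace ℝ (Fin n) => ∑ i, ∑ j, A i j * y i * y j) x
        (EuclideanSpace.single a 1) = ∑ j, A a j * x j + ∑ i, A i a * x i := by
  have hproj : ∀ i, fderiv ℝ (fun y : EuclideanSpace ℝ (Fin n) => y i) x = EuclideanSpace.proj i :=
    fun i => (EuclideanSpace.proj (𝕜 := ℝ) i).fderiv
  simp (disch := fun_prop) only [fderiv_fun_sum, fderiv_fun_mul, hproj, fderiv_fun_const,
    Pi.zero_apply, smul_zero, add_zero, sum_add_distrib, add_apply, _root_.sum_apply, smul_apply,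
    PiLp.proj_apply, PiLp.single_apply, smul_eq_mul, mul_ite, mul_one, mul_zero, sum_ite_eq',
    mem_univ, ↓reduceIte, sum_ite_irrel, sum_const_zero]
  rw [add_comm, sum_congr rfl fun j _ => mul_comm (x j) (A a j)]

theorem lap_quadratic (A : Fin n → Fin n → ℝ) (x : EuclideanSpace ℝ (Fin n)) :
    lap n (fun y : EuclideanSpace ℝ (Fin n) => ∑ i, ∑ j, A i j * y i * y j) x =
      2 * ∑ i, A i i := by
  have hterm : ∀ i j, lap n (fun y : EuclideanSpace ℝ (Fin n) => A i j * y i * y j) x =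
      2 * ∑ a, (A i j • EuclideanSpace.proj i : EuclideanSpace ℝ (Fin n) →L[ℝ] ℝ)
        (EuclideanSpace.single a 1) * EuclideanSpace.proj j (EuclideanSpace.single a 1) := by
    intro i j
    have hprod : (fun y : EuclideanSpace ℝ (Fin n) => A i j * y i * y j) = fun y =>
        (A i j • EuclideanSpace.proj i : EuclideanSpace ℝ (Fin n) →L[ℝ] ℝ) y *
          EuclideanSpace.proj j y := rfl
    rw [hprod, lap_clm_mul_clm]
  rw [lap_fun_sum (f := fun i y => ∑ j, A i j * y i * y j) (fun i _ => by fun_prop),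
    sum_congr rfl fun i _ =>
      lap_fun_sum (f := fun j y => A i j * y i * y j) (fun j _ => by fun_prop) x]
  simp [hterm, PiLp.single_apply, mul_sum]

end Laplacian

theorem stmt12_general (n : ℕ) (W : Fin n → Fin n → Fin n → Fin n → ℝ)
    (hP : ∀ i k j l, W i k j l = W j l i k)
    (hT : ∀ k l, ∑ i : Fin n, W i k i l = 0) (x : EuclideanSpace ℝ (Fin n)) :
    lap n (fun y => ∑ k : Fin n, ∑ l : Fin n,
        (∑ i : Fin n, ∑ j : Fin n, W i k j l * y i * y j) ^ 2) x =
      2 * ∑ j : Fin n, ∑ k : Fin n, ∑ l : Fin n,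
        ((∑ i : Fin n, W i j k l * x i) + (∑ i : Fin n, W i l k j * x i)) ^ 2 := by
  have hq : ∀ k l, ContDiff ℝ 2 fun y : EuclideanSpace ℝ (Fin n) =>
      ∑ i, ∑ j, W i k j l * y i * y j := fun k l => by fun_prop
  rw [lap_fun_sum (f := fun k y => ∑ l, (∑ i, ∑ j, W i k j l * y i * y j) ^ 2)
      (fun k _ => by fun_prop),
    sum_congr rfl fun k _ => lap_fun_sum
      (f := fun l y => (∑ i, ∑ j, W i k j l * y i * y j) ^ 2) (fun l _ => by fun_prop) x]
  simp only [lap_sq (hq _ _), lap_quadratic, hT, fderiv_quadratic_apply_single, mul_zero, zero_add]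
  have hpair : ∀ k l a, ∑ j, W a k j l * x j = ∑ i, W i l a k * x i :=
    fun k l a => sum_congr rfl fun j _ => by rw [hP]
  simp only [hpair, ← mul_sum]
  rw [sum_comm]
  exact congrArg _ (sum_congr rfl fun _ _ => sum_comm)

/-- For an algebraic Weyl tensor `W` on `ℝ^n`, the polynomial
`F(x) = Σ_{k,l} (Σ_{i,j} W_{ikjl} x_i x_j)²` satisfies
`ΔF(x) = 2 Σ_{j,k,l} (Σ_i W_{ijkl} x_i + Σ_i W_{ilkj} x_i)²`. -/
theorem stmt12 (n : ℕ) (W : Fin n → Fin n → Fin n → Fin n → ℝ)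
    (hA1 : ∀ i k j l, W i k j l = -W k i j l)
    (hA2 : ∀ i k j l, W i k j l = -W i k l j)
    (hP : ∀ i k j l, W i k j l = W j l i k)
    (hB : ∀ i k j l, W i k j l + W i j l k + W i l k j = 0)
    (hT : ∀ k l, ∑ i : Fin n, W i k i l = 0) (x : EuclideanSpace ℝ (Fin n)) :
    lap n (fun y => ∑ k : Fin n, ∑ l : Fin n,
        (∑ i : Fin n, ∑ j : Fin n, W i k j l * y i * y j) ^ 2) x =
      2 * ∑ j : Fin n, ∑ k : Fin n, ∑ l : Fin n,
        ((∑ i : Fin n, W i j k l * x i) + (∑ i : Fin n, W i l k j * x i)) ^ 2 :=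
  stmt12_general n W hP hT x
end
end

section
/- Let n ≥ 5. For the function u_1(x) = (|x|²+1)^{-(n-4)/2} on ℝ^n, one has ‖Δu_1‖²_{L²(ℝ^n)} / ‖u_1‖²_{L^{2n/(n-4)}(ℝ^n)} = (n(n+2)(n-2)(n-4)/16) · 2^{4/n} π^{2(n+1)/n} / Γ((n+1)/2)^{4/n}. -/
open MeasureTheory Real

noncomputable section

/-!
For `v = |x|² + 1`, `Δ v^b` is a combination of `v^(b-1)` and `v^(b-2)`, so for `b = -(n-4)/2`
both `(Δu₁)²` and `u₁^(2n/(n-4)) = v^(-n)` are combinations of powers `v^(-s)`. Polar coordinates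
and a Beta integral give `I(s) = ∫ v^(-s) = π^(n/2) Γ(s - n/2) / Γ(s)`; the recurrence
`I(s+1) = (s - n/2)/s · I(s)` collapses `‖Δu₁‖²` to `n(n+2)(n-2)(n-4) I(n)`, so the quotient is
`n(n+2)(n-2)(n-4) I(n)^(4/n)`, and Legendre's duplication formula evaluates
`I(n) = 2^(1-n) π^((n+1)/2) / Γ((n+1)/2)`.
-/

open Set Module

section Derivatives

variable {E : Type*} [NormedAddCommGroup E] [InnerProductSpace ℝ E]

theorem hasFDerivAt_norm_sq_add_one_rpow (b : ℝ) (x : E) :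
    HasFDerivAt (fun y : E => (‖y‖ ^ 2 + 1) ^ b)
      ((2 * b * (‖x‖ ^ 2 + 1) ^ (b - 1)) • innerSL ℝ x) x := by
  have h := (hasDerivAt_rpow_const (p := b) (Or.inl (by positivity))).comp_hasFDerivAt x
    ((hasStrictFDerivAt_norm_sq x).hasFDerivAt.add_const 1)
  refine h.congr_fderiv ?_
  rw [← Nat.cast_smul_eq_nsmul ℝ, smul_smul]
  ring_nf

theorem fderiv_norm_sq_add_one_rpow (b : ℝ) :
    fderiv ℝ (fun y : E => (‖y‖ ^ 2 + 1) ^ b) =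
      fun x => (2 * b * (‖x‖ ^ 2 + 1) ^ (b - 1)) • innerSL ℝ x :=
  funext fun x => (hasFDerivAt_norm_sq_add_one_rpow b x).fderiv

theorem iteratedFDeriv_two_norm_sq_add_one_rpow_apply (b : ℝ) (x v w : E) :
    iteratedFDeriv ℝ 2 (fun y : E => (‖y‖ ^ 2 + 1) ^ b) x ![v, w] =
      2 * b * (‖x‖ ^ 2 + 1) ^ (b - 1) * inner ℝ v w
        + 4 * b * (b - 1) * (‖x‖ ^ 2 + 1) ^ (b - 2) * inner ℝ x v * inner ℝ x w := by
  have hcoeff : HasFDerivAt (fun y : E => 2 * b * (‖y‖ ^ 2 + 1) ^ (b - 1))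
      ((2 * b * (2 * (b - 1) * (‖x‖ ^ 2 + 1) ^ (b - 1 - 1))) • innerSL ℝ x) x := by
    rw [← smul_smul]
    exact (hasFDerivAt_norm_sq_add_one_rpow (b - 1) x).const_mul (2 * b)
  have h : HasFDerivAt (fun y : E => (2 * b * (‖y‖ ^ 2 + 1) ^ (b - 1)) • innerSL ℝ y) _ x :=
    hcoeff.smul (innerSL ℝ (E := E)).hasFDerivAt
  rw [iteratedFDeriv_two_apply, fderiv_norm_sq_add_one_rpow, h.fderiv]
  simp only [add_apply, smul_apply, ContinuousLinearMap.smulRight_apply, innerSL_apply_apply,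
    smul_eq_mul, Matrix.cons_val_zero, Matrix.cons_val_one]
  rw [innerSL_apply_apply, show b - 1 - 1 = b - 2 by ring]
  ring

end Derivatives

theorem lap_norm_sq_add_one_rpow (n : ℕ) (b : ℝ) (x : EuclideanSpace ℝ (Fin n)) :
    lap n (fun y => (‖y‖ ^ 2 + 1) ^ b) x =
      2 * b * ((n + 2 * (b - 1)) * (‖x‖ ^ 2 + 1) ^ (b - 1)
        - 2 * (b - 1) * (‖x‖ ^ 2 + 1) ^ (b - 2)) := by
  have hsum (c : ℝ) : ∑ i : Fin n, c * x i * x i = c * ‖x‖ ^ 2 := by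
    rw [EuclideanSpace.real_norm_sq_eq, Finset.mul_sum]
    simp only [mul_assoc, sq]
  have hpow : (‖x‖ ^ 2 + 1) ^ (b - 1) = (‖x‖ ^ 2 + 1) ^ (b - 2) * (‖x‖ ^ 2 + 1) := by
    rw [← rpow_add_one (by positivity)]
    ring_nf
  simp only [lap, iteratedFDeriv_two_norm_sq_add_one_rpow_apply, EuclideanSpace.inner_single_right,
    PiLp.single_apply, if_pos, conj_trivial, mul_one, one_mul, Finset.sum_add_distrib, hsum,
    Finset.sum_const, Finset.card_univ, Fintype.card_fin, nsmul_eq_mul, hpow]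
  ring

theorem sq_lap_bubble (n : ℕ) (x : EuclideanSpace ℝ (Fin n)) :
    (lap n (fun y => (‖y‖ ^ 2 + 1) ^ (-(((n : ℝ) - 4) / 2))) x) ^ 2 =
      ((n : ℝ) - 4) ^ 2 * (4 * (‖x‖ ^ 2 + 1) ^ (-((n : ℝ) - 2))
        + 4 * ((n : ℝ) - 2) * (‖x‖ ^ 2 + 1) ^ (-((n : ℝ) - 1))
        + ((n : ℝ) - 2) ^ 2 * (‖x‖ ^ 2 + 1) ^ (-(n : ℝ))) := by
  have hv : 0 < ‖x‖ ^ 2 + 1 := by positivity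
  set b : ℝ := -(((n : ℝ) - 4) / 2) with hb
  have hpp : (‖x‖ ^ 2 + 1) ^ (b - 1) * (‖x‖ ^ 2 + 1) ^ (b - 1) =
      (‖x‖ ^ 2 + 1) ^ (-((n : ℝ) - 2)) := by
    rw [← rpow_add hv, hb]; ring_nf
  have hpq : (‖x‖ ^ 2 + 1) ^ (b - 1) * (‖x‖ ^ 2 + 1) ^ (b - 2) =
      (‖x‖ ^ 2 + 1) ^ (-((n : ℝ) - 1)) := by
    rw [← rpow_add hv, hb]; ring_nf
  have hqq : (‖x‖ ^ 2 + 1) ^ (b - 2) * (‖x‖ ^ 2 + 1) ^ (b - 2) = (‖x‖ ^ 2 + 1) ^ (-(n : ℝ)) := by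
    rw [← rpow_add hv, hb]; ring_nf
  rw [lap_norm_sq_add_one_rpow]
  linear_combination
    ((n : ℝ) - 4) ^ 2 * (4 * hpp + 4 * ((n : ℝ) - 2) * hpq + ((n : ℝ) - 2) ^ 2 * hqq)

theorem integral_rpow_mul_one_sub_rpow_Ioo {a b : ℝ} (ha : 0 < a) (hb : 0 < b) :
    ∫ x in Ioo (0 : ℝ) 1, x ^ (a - 1) * (1 - x) ^ (b - 1) = Gamma a * Gamma b / Gamma (a + b) := by
  rw [← ProbabilityTheory.beta, ProbabilityTheory.beta_eq_betaIntegralReal a b ha hb,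
    Complex.betaIntegral, intervalIntegral.integral_of_le zero_le_one,
    ← integral_Ioc_eq_integral_Ioo, ← RCLike.re_to_complex, ← integral_re]
  · refine setIntegral_congr_fun measurableSet_Ioc fun x ⟨hx0, hx1⟩ ↦ ?_
    norm_cast
    rw [← Complex.ofReal_cpow hx0.le, ← Complex.ofReal_cpow (by linarith), RCLike.re_to_complex,
      ← Complex.ofReal_mul, Complex.ofReal_re]
  · rw [← IntegrableOn, ← intervalIntegrable_iff_integrableOn_Ioc_of_le zero_le_one]
    exact Complex.betaIntegral_convergent (by simpa) (by simpa)

theorem image_div_one_sub_Ioo : (fun x : ℝ => x / (1 - x)) '' Ioo 0 1 = Ioi 0 := by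
  ext y
  constructor
  · rintro ⟨x, ⟨hx0, hx1⟩, rfl⟩
    exact div_pos hx0 (by linarith)
  · intro (hy : 0 < y)
    refine ⟨y / (1 + y), ⟨by positivity, (div_lt_one (by linarith)).2 (by linarith)⟩, ?_⟩
    field_simp
    ring

theorem integral_rpow_mul_one_add_rpow_neg_Ioi {a b : ℝ} (ha : 0 < a) (hb : 0 < b) :
    ∫ t in Ioi (0 : ℝ), t ^ (a - 1) * (1 + t) ^ (-(a + b)) = Gamma a * Gamma b / Gamma (a + b) := by
  have hderiv : ∀ x ∈ Ioo (0 : ℝ) 1,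
      HasDerivWithinAt (fun x : ℝ => x / (1 - x)) ((1 - x)⁻¹ ^ 2) (Ioo 0 1) x := by
    intro x ⟨_, hx1⟩
    have hne : 1 - x ≠ 0 := by linarith
    refine (((hasDerivAt_id x).div ((hasDerivAt_const x 1).sub (hasDerivAt_id x)) hne)
      |>.hasDerivWithinAt).congr_deriv ?_
    simp only [Pi.sub_apply, id_eq]
    field_simp
    ring
  have hinj : InjOn (fun x : ℝ => x / (1 - x)) (Ioo 0 1) := by
    intro x ⟨_, hx1⟩ y ⟨_, hy1⟩ hxy
    have : 1 - x ≠ 0 := by linarith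
    have : 1 - y ≠ 0 := by linarith
    field_simp at hxy
    linarith
  rw [← image_div_one_sub_Ioo, integral_image_eq_integral_abs_deriv_smul measurableSet_Ioo hderiv
    hinj, ← integral_rpow_mul_one_sub_rpow_Ioo ha hb]
  refine setIntegral_congr_fun measurableSet_Ioo fun x ⟨hx0, hx1⟩ => ?_
  have hu : 0 < 1 - x := by linarith
  have hsum : 1 + x / (1 - x) = (1 - x)⁻¹ := by field_simp; ring
  have hderiv_eq : (1 - x)⁻¹ ^ 2 = (1 - x) ^ (-2 : ℝ) := by rw [rpow_neg hu.le, rpow_two, inv_pow]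
  have hdiv : (x / (1 - x)) ^ (a - 1) = x ^ (a - 1) * (1 - x) ^ (-(a - 1)) := by
    rw [div_rpow hx0.le hu.le, rpow_neg hu.le, div_eq_mul_inv]
  have hinv : (1 - x)⁻¹ ^ (-(a + b)) = (1 - x) ^ (a + b) := by
    rw [inv_rpow hu.le, rpow_neg hu.le, inv_inv]
  calc |(1 - x)⁻¹ ^ 2| • ((x / (1 - x)) ^ (a - 1) * (1 + x / (1 - x)) ^ (-(a + b)))
      = x ^ (a - 1) * ((1 - x) ^ (-2 : ℝ) * (1 - x) ^ (-(a - 1)) * (1 - x) ^ (a + b)) := by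
        rw [hsum, abs_of_nonneg (by positivity), hderiv_eq, hdiv, hinv, smul_eq_mul]
        ring
    _ = x ^ (a - 1) * (1 - x) ^ (b - 1) := by
        rw [← rpow_add hu, ← rpow_add hu]
        ring_nf

theorem integral_rpow_mul_sq_add_one_rpow_neg_Ioi {d s : ℝ} (hd : 0 < d) (hds : d < 2 * s) :
    ∫ r in Ioi (0 : ℝ), r ^ (d - 1) * (r ^ 2 + 1) ^ (-s) =
      Gamma (d / 2) * Gamma (s - d / 2) / (2 * Gamma s) := by
  have hbeta := integral_rpow_mul_one_add_rpow_neg_Ioi (a := d / 2) (b := s - d / 2)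
    (by positivity) (by linarith)
  rw [add_sub_cancel] at hbeta
  have hsub := integral_comp_rpow_Ioi_of_pos (p := 2) two_pos
    (g := fun t : ℝ => t ^ (d / 2 - 1) * (1 + t) ^ (-s))
  have hpt : ∀ r ∈ Ioi (0 : ℝ),
      (2 * r ^ ((2 : ℝ) - 1)) • ((r ^ (2 : ℝ)) ^ (d / 2 - 1) * (1 + r ^ (2 : ℝ)) ^ (-s)) =
        2 * (r ^ (d - 1) * (r ^ 2 + 1) ^ (-s)) := by
    intro r (hr : 0 < r)
    rw [← rpow_mul hr.le, rpow_two, smul_eq_mul, add_comm 1, mul_assoc, ← mul_assoc (r ^ _),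
      ← rpow_add hr]
    ring_nf
  rw [hbeta, setIntegral_congr_fun measurableSet_Ioi hpt, integral_const_mul] at hsub
  rw [mul_comm 2, ← div_div, ← hsub]
  ring

section NormSqAddOne

variable {E : Type*} [NormedAddCommGroup E] [InnerProductSpace ℝ E] [FiniteDimensional ℝ E]
  [MeasurableSpace E] [BorelSpace E]

theorem integrable_norm_sq_add_one_rpow_neg {s : ℝ} (hs : finrank ℝ E < 2 * s) :
    Integrable fun x : E => (‖x‖ ^ 2 + 1) ^ (-s) := by
  refine (integrable_rpow_neg_one_add_norm_sq (μ := volume) hs).congr (.of_forall fun x => ?_)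
  simp only [neg_div, mul_div_cancel_left₀ s two_ne_zero, add_comm (1 : ℝ)]

variable [Nontrivial E]

theorem integral_norm_sq_add_one_rpow_neg {s : ℝ} (hs : finrank ℝ E < 2 * s) :
    ∫ x : E, (‖x‖ ^ 2 + 1) ^ (-s) =
      π ^ ((finrank ℝ E : ℝ) / 2) * Gamma (s - finrank ℝ E / 2) / Gamma s := by
  have hd : 0 < finrank ℝ E := finrank_pos
  have hball : volume.real (Metric.ball (0 : E) 1) =
      π ^ ((finrank ℝ E : ℝ) / 2) / Gamma (finrank ℝ E / 2 + 1) := by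
    rw [measureReal_def, InnerProductSpace.volume_ball, ENNReal.ofReal_one, one_pow, one_mul,
      ENNReal.toReal_ofReal (by positivity), sqrt_eq_rpow, ← rpow_natCast, ← rpow_mul pi_pos.le]
    ring_nf
  have hradial : ∫ r in Ioi (0 : ℝ), r ^ (finrank ℝ E - 1) * (r ^ 2 + 1) ^ (-s) =
      Gamma (finrank ℝ E / 2) * Gamma (s - finrank ℝ E / 2) / (2 * Gamma s) := by
    rw [← integral_rpow_mul_sq_add_one_rpow_neg_Ioi (by exact_mod_cast hd) hs]
    refine setIntegral_congr_fun measurableSet_Ioi fun r _ => ?_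
    rw [← rpow_natCast, Nat.cast_sub hd, Nat.cast_one]
  rw [integral_fun_norm_addHaar volume fun r => (r ^ 2 + 1) ^ (-s), hball]
  simp only [smul_eq_mul, nsmul_eq_mul]
  rw [hradial, Gamma_add_one (by positivity)]
  have : Gamma s ≠ 0 := (Gamma_pos_of_pos (by linarith [(finrank ℝ E).cast_nonneg (α := ℝ)])).ne'
  field_simp

theorem integral_norm_sq_add_one_rpow_neg_pos {s : ℝ} (hs : finrank ℝ E < 2 * s) :
    0 < ∫ x : E, (‖x‖ ^ 2 + 1) ^ (-s) := by
  have hd : (0 : ℝ) ≤ finrank ℝ E := (finrank ℝ E).cast_nonneg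
  rw [integral_norm_sq_add_one_rpow_neg hs]
  exact div_pos (mul_pos (by positivity) (Gamma_pos_of_pos (by linarith)))
    (Gamma_pos_of_pos (by linarith))

theorem integral_norm_sq_add_one_rpow_neg_add_one {s : ℝ} (hs : finrank ℝ E < 2 * s) :
    ∫ x : E, (‖x‖ ^ 2 + 1) ^ (-(s + 1)) =
      (s - finrank ℝ E / 2) / s * ∫ x : E, (‖x‖ ^ 2 + 1) ^ (-s) := by
  have hd : (0 : ℝ) ≤ finrank ℝ E := (finrank ℝ E).cast_nonneg
  rw [integral_norm_sq_add_one_rpow_neg hs, integral_norm_sq_add_one_rpow_neg (by linarith),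
    show s + 1 - finrank ℝ E / 2 = (s - finrank ℝ E / 2) + 1 by ring,
    Gamma_add_one (by linarith), Gamma_add_one (by linarith)]
  have : Gamma s ≠ 0 := (Gamma_pos_of_pos (by linarith)).ne'
  have : s ≠ 0 := by linarith
  field_simp

theorem integral_norm_sq_add_one_rpow_neg_finrank :
    ∫ x : E, (‖x‖ ^ 2 + 1) ^ (-(finrank ℝ E : ℝ)) =
      2 ^ (1 - (finrank ℝ E : ℝ)) * π ^ (((finrank ℝ E : ℝ) + 1) / 2) /
        Gamma (((finrank ℝ E : ℝ) + 1) / 2) := by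
  have hd : (0 : ℝ) < finrank ℝ E := by exact_mod_cast finrank_pos
  have hdup := Gamma_mul_Gamma_add_half ((finrank ℝ E : ℝ) / 2)
  rw [mul_div_cancel₀ _ two_ne_zero, sqrt_eq_rpow] at hdup
  rw [integral_norm_sq_add_one_rpow_neg (by linarith), sub_half, add_div, rpow_add pi_pos,
    div_eq_div_iff (Gamma_pos_of_pos hd).ne' (Gamma_pos_of_pos (by positivity)).ne']
  linear_combination π ^ ((finrank ℝ E : ℝ) / 2) * hdup

theorem integral_norm_sq_add_one_rpow_neg_finrank_rpow_four_div :
    (∫ x : E, (‖x‖ ^ 2 + 1) ^ (-(finrank ℝ E : ℝ))) ^ (4 / (finrank ℝ E : ℝ)) =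
      2 ^ (4 / (finrank ℝ E : ℝ)) * π ^ (2 * ((finrank ℝ E : ℝ) + 1) / finrank ℝ E) /
        (16 * Gamma (((finrank ℝ E : ℝ) + 1) / 2) ^ (4 / (finrank ℝ E : ℝ))) := by
  have hd : (0 : ℝ) < finrank ℝ E := by exact_mod_cast finrank_pos
  rw [integral_norm_sq_add_one_rpow_neg_finrank,
    div_rpow (by positivity) (Gamma_pos_of_pos (by positivity)).le,
    mul_rpow (by positivity) (by positivity), ← rpow_mul zero_le_two, ← rpow_mul pi_pos.le,
    show (1 - (finrank ℝ E : ℝ)) * (4 / finrank ℝ E) = 4 / finrank ℝ E - 4 by field_simp,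
    rpow_sub two_pos, show ((finrank ℝ E : ℝ) + 1) / 2 * (4 / finrank ℝ E) =
      2 * (finrank ℝ E + 1) / finrank ℝ E by ring]
  norm_num
  ring

end NormSqAddOne

theorem norm_sq_add_one_rpow_rpow_two_mul_div {E : Type*} [Norm E] {d : ℝ} (hd : d ≠ 4) (x : E) :
    ((‖x‖ ^ 2 + 1) ^ (-((d - 4) / 2))) ^ (2 * d / (d - 4)) = (‖x‖ ^ 2 + 1) ^ (-d) := by
  rw [← rpow_mul (by positivity)]
  congr 1
  field_simp [sub_ne_zero.2 hd]

theorem integral_sq_lap_bubble (n : ℕ) (hn : 5 ≤ n) :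
    ∫ x : EuclideanSpace ℝ (Fin n),
        (lap n (fun y => (‖y‖ ^ 2 + 1) ^ (-(((n : ℝ) - 4) / 2))) x) ^ 2 =
      (n : ℝ) * ((n : ℝ) + 2) * ((n : ℝ) - 2) * ((n : ℝ) - 4) *
        ∫ x : EuclideanSpace ℝ (Fin n), (‖x‖ ^ 2 + 1) ^ (-(n : ℝ)) := by
  have : Nonempty (Fin n) := ⟨⟨0, by omega⟩⟩
  have h5 : (5 : ℝ) ≤ n := by exact_mod_cast hn
  have hint (s : ℝ) (hs : (n : ℝ) < 2 * s) :
      Integrable fun x : EuclideanSpace ℝ (Fin n) => (‖x‖ ^ 2 + 1) ^ (-s) :=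
    integrable_norm_sq_add_one_rpow_neg (by rwa [finrank_euclideanSpace_fin])
  have hrec (s : ℝ) (hs : (n : ℝ) < 2 * s) :=
    integral_norm_sq_add_one_rpow_neg_add_one (E := EuclideanSpace ℝ (Fin n))
      (by rwa [finrank_euclideanSpace_fin])
  simp only [finrank_euclideanSpace_fin] at hrec
  have h1 := hrec ((n : ℝ) - 2) (by linarith)
  have h2 := hrec ((n : ℝ) - 1) (by linarith)
  rw [show (n : ℝ) - 2 + 1 = (n : ℝ) - 1 by ring] at h1
  rw [show (n : ℝ) - 1 + 1 = (n : ℝ) by ring] at h2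
  simp_rw [sq_lap_bubble]
  rw [integral_const_mul,
    integral_add (((hint _ (by linarith)).const_mul _).fun_add ((hint _ (by linarith)).const_mul _))
      ((hint _ (by linarith)).const_mul _),
    integral_add ((hint _ (by linarith)).const_mul _) ((hint _ (by linarith)).const_mul _),
    integral_const_mul, integral_const_mul, integral_const_mul, h2, h1]
  have : (n : ℝ) - 1 ≠ 0 := by linarith
  have : (n : ℝ) - 2 ≠ 0 := by linarith
  field_simp
  ring

/-- Let `n ≥ 5`. For `u₁(x) = (|x|²+1)^{-(n-4)/2}` on `ℝ^n`,
`‖Δu₁‖²_{L²} / ‖u₁‖²_{L^{2n/(n-4)}} = (n(n+2)(n-2)(n-4)/16) · 2^{4/n} π^{2(n+1)/n} / Γ((n+1)/2)^{4/n}`,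
where `‖u₁‖²_{L^{2n/(n-4)}} = (∫ u₁^{2n/(n-4)})^{(n-4)/n}`. -/
theorem stmt17 (n : ℕ) (hn : 5 ≤ n) :
    (∫ x : EuclideanSpace ℝ (Fin n),
        (lap n (fun y => (‖y‖ ^ (2 : ℕ) + 1) ^ (-(((n : ℝ) - 4) / 2))) x) ^ (2 : ℕ)) /
      (∫ x : EuclideanSpace ℝ (Fin n),
          ((‖x‖ ^ (2 : ℕ) + 1) ^ (-(((n : ℝ) - 4) / 2))) ^ (2 * (n : ℝ) / ((n : ℝ) - 4))) ^
        (((n : ℝ) - 4) / (n : ℝ)) =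
      ((n : ℝ) * ((n : ℝ) + 2) * ((n : ℝ) - 2) * ((n : ℝ) - 4) / 16) *
        (2 : ℝ) ^ (4 / (n : ℝ)) * π ^ (2 * ((n : ℝ) + 1) / (n : ℝ)) /
          Real.Gamma (((n : ℝ) + 1) / 2) ^ (4 / (n : ℝ)) := by
  have : Nonempty (Fin n) := ⟨⟨0, by omega⟩⟩
  have h5 : (5 : ℝ) ≤ n := by exact_mod_cast hn
  have hI := integral_norm_sq_add_one_rpow_neg_finrank_rpow_four_div (E := EuclideanSpace ℝ (Fin n))
  rw [finrank_euclideanSpace_fin] at hI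
  have hIpos : 0 < ∫ x : EuclideanSpace ℝ (Fin n), (‖x‖ ^ 2 + 1) ^ (-(n : ℝ)) :=
    integral_norm_sq_add_one_rpow_neg_pos (by rw [finrank_euclideanSpace_fin]; linarith)
  have hexp : 1 - ((n : ℝ) - 4) / n = 4 / n := by field_simp; ring
  simp_rw [norm_sq_add_one_rpow_rpow_two_mul_div (show (n : ℝ) ≠ 4 by linarith)]
  rw [integral_sq_lap_bubble n hn, mul_div_assoc,
    ← rpow_one_sub' hIpos.le (by rw [hexp]; positivity), hexp, hI]
  ring
end
end
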